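/- arXiv:2305.06763 — 3 statements merged into one kernel-verified Lean document; each statement's English description precedes it below -/
import Mathlib

section
/- Let n, t ∈ ℕ with n ≥ 1, and let e and f be linear MBAs over BitVec n in t variables, i.e., e(x) = Σ_{i∈I} a_i · E_i(x) and f(x) = Σ_{k∈K} c_k · F_k(x) where a_i, c_k ∈ BitVec n and E_i, F_k are bitwise lifts of Boolean functions in t variables. Then e(x) = f(x) for all x ∈ (BitVec n)^t if and only if e(b) = f(b) for every tuple b ∈ (BitVec n)^t in which each component is either the word 0 or the word 1. -/
/-!
Bit `k` of a bitwise expression depends only on column `k` of the input bits, so a linear MBA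
is `e x = ∑ₖ 2ᵏ · S (column k of x)` with the signature `S β = ∑ᵢ aᵢ · [fᵢ β]`. On the 0/1 tuple
`b_β` whose column 0 is `β` and whose other columns vanish, this reads
`e b_β = S β + (2ⁿ - 2) · S 0 = S β - 2 · S 0`; hence `e b_0 = -S 0` and `S β = e b_β - 2 · e b_0`.
So the values on 0/1 tuples determine the signature, and the signature determines `e`.
-/

open Finset

theorem Nat.mod_two_pow_eq_sum_testBit (m n : ℕ) :
    m % 2 ^ n = ∑ k ∈ range n, if m.testBit k then 2 ^ k else 0 := by
  induction n with
  | zero => simp [Nat.mod_one]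
  | succ n ih =>
    rw [Nat.mod_pow_succ, ih, sum_range_succ, Nat.testBit_eq_decide_div_mod_eq]
    rcases Nat.mod_two_eq_zero_or_one (m / 2 ^ n) with h | h <;> simp [h]

namespace BitVec

theorem eq_sum_two_pow_mul_getLsbD {n : ℕ} (w : BitVec n) :
    w = ∑ k ∈ range n, (2 ^ k : BitVec n) * if w.getLsbD k then 1 else 0 := by
  have hw : w = ((w.toNat % 2 ^ n : ℕ) : BitVec n) := by simp [Nat.mod_eq_of_lt w.isLt]
  conv_lhs => rw [hw, Nat.mod_two_pow_eq_sum_testBit]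
  push_cast
  refine sum_congr rfl fun k _ => ?_
  split_ifs <;> simp_all [getLsbD]

theorem sum_range_two_pow (n : ℕ) : ∑ k ∈ range n, (2 ^ k : BitVec n) = -1 := by
  conv_rhs => rw [eq_sum_two_pow_mul_getLsbD (-1 : BitVec n)]
  refine sum_congr rfl fun k hk => ?_
  simp [neg_one_eq_allOnes, mem_range.mp hk]

end BitVec

section LinearMBA

variable {ι κ : Type*} {n : ℕ}

def bitColumn (x : ι → BitVec n) (k : ℕ) : ι → Bool := fun j => (x j).getLsbD k

def IsBitwiseLift (f : (ι → Bool) → Bool) (E : (ι → BitVec n) → BitVec n) : Prop :=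
  ∀ x k, k < n → (E x).getLsbD k = f (bitColumn x k)

def mbaSignature [Fintype κ] (a : κ → BitVec n) (f : κ → (ι → Bool) → Bool)
    (β : ι → Bool) : BitVec n :=
  ∑ i, a i * if f i β then 1 else 0

def zeroOneTuple (β : ι → Bool) : ι → BitVec n := fun j => if β j then 1 else 0

theorem IsBitwiseLift.eq_sum {f : (ι → Bool) → Bool} {E : (ι → BitVec n) → BitVec n}
    (hE : IsBitwiseLift f E) (x : ι → BitVec n) :
    E x = ∑ k ∈ range n, (2 ^ k : BitVec n) * if f (bitColumn x k) then 1 else 0 := by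
  conv_lhs => rw [BitVec.eq_sum_two_pow_mul_getLsbD (E x)]
  exact sum_congr rfl fun k hk => by rw [hE x k (mem_range.mp hk)]

theorem sum_mul_eq_sum_two_pow_mul_mbaSignature [Fintype κ] (a : κ → BitVec n)
    (f : κ → (ι → Bool) → Bool) (E : κ → (ι → BitVec n) → BitVec n)
    (hE : ∀ i, IsBitwiseLift (f i) (E i)) (x : ι → BitVec n) :
    ∑ i, a i * E i x = ∑ k ∈ range n, 2 ^ k * mbaSignature a f (bitColumn x k) := by
  simp only [mbaSignature, mul_sum, (hE _).eq_sum x]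
  rw [sum_comm]
  exact sum_congr rfl fun k _ => sum_congr rfl fun i _ => by ring

theorem zeroOneTuple_eq_zero_or_one (β : ι → Bool) (j : ι) :
    zeroOneTuple (n := n) β j = 0 ∨ zeroOneTuple (n := n) β j = 1 := by
  unfold zeroOneTuple
  split_ifs <;> simp

theorem bitColumn_zeroOneTuple (β : ι → Bool) {k : ℕ} (hk : k < n) :
    bitColumn (zeroOneTuple (n := n) β) k = if k = 0 then β else fun _ => false := by
  funext j
  by_cases hβ : β j <;> split_ifs <;> simp_all [bitColumn, zeroOneTuple]

theorem sum_two_pow_mul_bitColumn_zeroOneTuple (G : (ι → Bool) → BitVec n) (β : ι → Bool) :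
    ∑ k ∈ range n, 2 ^ k * G (bitColumn (zeroOneTuple (n := n) β) k) =
      G β - 2 * G fun _ => false := by
  cases n with
  | zero => exact Subsingleton.elim _ _
  | succ m =>
    have htail : ∑ k ∈ range m, (2 ^ (k + 1) : BitVec (m + 1)) = -2 := by
      have := BitVec.sum_range_two_pow (m + 1)
      rw [sum_range_succ'] at this
      linear_combination this
    have hcol : ∀ k ∈ range m, bitColumn (zeroOneTuple β) (k + 1) = fun _ => false :=
      fun k hk => by
        rw [bitColumn_zeroOneTuple β (Nat.succ_lt_succ (mem_range.mp hk)), if_neg k.succ_ne_zero]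
    rw [sum_range_succ', bitColumn_zeroOneTuple β (Nat.succ_pos m), if_pos rfl,
      sum_congr rfl fun k hk => by rw [hcol k hk], ← sum_mul, htail]
    ring

theorem mbaSignature_eq_sub [Fintype κ] (a : κ → BitVec n)
    (f : κ → (ι → Bool) → Bool) (E : κ → (ι → BitVec n) → BitVec n)
    (hE : ∀ i, IsBitwiseLift (f i) (E i)) (β : ι → Bool) :
    mbaSignature a f β =
      ∑ i, a i * E i (zeroOneTuple β) - 2 * ∑ i, a i * E i (zeroOneTuple fun _ => false) := by
  simp only [sum_mul_eq_sum_two_pow_mul_mbaSignature a f E hE,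
    sum_two_pow_mul_bitColumn_zeroOneTuple]
  ring

end LinearMBA

theorem linear_mba_eq_iff_eq_on_zero_one_general
    (n t : ℕ) (p q : ℕ)
    (a : Fin p → BitVec n) (c : Fin q → BitVec n)
    (fE : Fin p → (Fin t → Bool) → Bool)
    (fF : Fin q → (Fin t → Bool) → Bool)
    (E : Fin p → (Fin t → BitVec n) → BitVec n)
    (F : Fin q → (Fin t → BitVec n) → BitVec n)
    (hE : ∀ (i : Fin p) (x : Fin t → BitVec n) (k : ℕ), k < n →
      (E i x).getLsbD k = fE i (fun j => (x j).getLsbD k))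
    (hF : ∀ (i : Fin q) (x : Fin t → BitVec n) (k : ℕ), k < n →
      (F i x).getLsbD k = fF i (fun j => (x j).getLsbD k)) :
    (∀ x : Fin t → BitVec n, (∑ i, a i * E i x) = (∑ k, c k * F k x)) ↔
      (∀ b : Fin t → BitVec n, (∀ j, b j = 0 ∨ b j = 1) →
        (∑ i, a i * E i b) = (∑ k, c k * F k b)) := by
  refine ⟨fun h b _ => h b, fun h x => ?_⟩
  have hsig : ∀ β, mbaSignature a fE β = mbaSignature c fF β := fun β => by
    rw [mbaSignature_eq_sub a fE E hE, mbaSignature_eq_sub c fF F hF,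
      h _ (zeroOneTuple_eq_zero_or_one β), h _ (zeroOneTuple_eq_zero_or_one _)]
  rw [sum_mul_eq_sum_two_pow_mul_mbaSignature a fE E hE,
    sum_mul_eq_sum_two_pow_mul_mbaSignature c fF F hF]
  simp only [hsig]

/-- **Theorem 2 (SiMBA).**  Two linear MBAs `e x = Σ_i a i * E i x` and
`f x = Σ_k c k * F k x` over `BitVec n` (`n ≥ 1`) in `t` variables, where the
`E i`, `F k` are bitwise lifts of Boolean functions, agree on all inputs iff
they agree on every tuple whose components are each the word `0` or `1`. -/
theorem linear_mba_eq_iff_eq_on_zero_one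
    (n t : ℕ) (hn : 1 ≤ n) (p q : ℕ)
    (a : Fin p → BitVec n) (c : Fin q → BitVec n)
    (fE : Fin p → (Fin t → Bool) → Bool)
    (fF : Fin q → (Fin t → Bool) → Bool)
    (E : Fin p → (Fin t → BitVec n) → BitVec n)
    (F : Fin q → (Fin t → BitVec n) → BitVec n)
    (hE : ∀ (i : Fin p) (x : Fin t → BitVec n) (k : ℕ), k < n →
      (E i x).getLsbD k = fE i (fun j => (x j).getLsbD k))
    (hF : ∀ (i : Fin q) (x : Fin t → BitVec n) (k : ℕ), k < n →
      (F i x).getLsbD k = fF i (fun j => (x j).getLsbD k)) :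
    (∀ x : Fin t → BitVec n, (∑ i, a i * E i x) = (∑ k, c k * F k x)) ↔
      (∀ b : Fin t → BitVec n, (∀ j, b j = 0 ∨ b j = 1) →
        (∑ i, a i * E i b) = (∑ k, c k * F k b)) :=
  linear_mba_eq_iff_eq_on_zero_one_general n t p q a c fE fF E F hE hF
end

section
/- For every n ∈ ℕ and all a, b, X ∈ BitVec n such that a and b are bitwise disjoint (i.e., a & b = 0), the identity (a ^ X) + 2*(b | X) = 2*((~(a + b)) & X) + X + a + 2*b holds, where ^ denotes bitwise xor and arithmetic is modulo 2^n. -/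
/-!
Addition of bitwise disjoint words produces no carries, so it coincides with `|||`
(`BitVec.add_eq_or_of_and_eq_zero`). Splitting words into disjoint pieces turns this into the
ring identities `x + y = (x ^^^ y) + 2 (x &&& y)` and `x + y = (x ||| y) + (x &&& y)`, and, for
`c = a + b` with `a, b` disjoint, into `X = (c &&& X) + (~~~c &&& X)` with
`c &&& X = (a &&& X) + (b &&& X)`. The theorem is a linear combination of these four identities.
-/

namespace BitVec

variable {w : ℕ}

theorem and_add_and_not (x y : BitVec w) : (x &&& y) + (x &&& ~~~y) = x := by
  rw [add_eq_or_of_and_eq_zero]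
  · ext i; simp only [getElem_or, getElem_and, getElem_not]; cases x[i] <;> cases y[i] <;> rfl
  · ext i; simp only [getElem_and, getElem_not, getElem_zero]; cases x[i] <;> cases y[i] <;> rfl

theorem or_eq_add_and_not (x y : BitVec w) : x ||| y = x + (y &&& ~~~x) := by
  rw [add_eq_or_of_and_eq_zero]
  · ext i; simp only [getElem_or, getElem_and, getElem_not]; cases x[i] <;> cases y[i] <;> rfl
  · ext i; simp only [getElem_and, getElem_not, getElem_zero]; cases x[i] <;> cases y[i] <;> rfl

theorem xor_eq_and_not_add_and_not (x y : BitVec w) :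
    x ^^^ y = (x &&& ~~~y) + (y &&& ~~~x) := by
  rw [add_eq_or_of_and_eq_zero]
  · ext i; simp only [getElem_xor, getElem_or, getElem_and, getElem_not]
    cases x[i] <;> cases y[i] <;> rfl
  · ext i; simp only [getElem_and, getElem_not, getElem_zero]; cases x[i] <;> cases y[i] <;> rfl

theorem add_eq_or_add_and (x y : BitVec w) : x + y = (x ||| y) + (x &&& y) := by
  rw [or_eq_add_and_not, BitVec.and_comm x y]
  linear_combination -and_add_and_not y x

theorem add_eq_xor_add_two_mul_and (x y : BitVec w) : x + y = (x ^^^ y) + 2 * (x &&& y) := by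
  have hy := and_add_and_not y x
  rw [BitVec.and_comm y x] at hy
  rw [xor_eq_and_not_add_and_not]
  linear_combination -and_add_and_not x y - hy

theorem add_and_of_and_eq_zero {x y : BitVec w} (h : x &&& y = 0) (z : BitVec w) :
    (x + y) &&& z = (x &&& z) + (y &&& z) := by
  have hdisj : (x &&& z) &&& (y &&& z) = 0 := by
    rw [show (x &&& z) &&& (y &&& z) = (x &&& y) &&& z by ac_rfl, h]
    exact zero_and
  rw [add_eq_or_of_and_eq_zero _ _ h, add_eq_or_of_and_eq_zero _ _ hdisj, and_or_distrib_right]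

end BitVec

/-- For bitwise disjoint constants `a, b`:
`(a ^ X) + 2(b | X) = 2((~(a + b)) & X) + X + a + 2b`. -/
theorem xor_add_two_mul_or_of_disjoint (n : ℕ) (a b X : BitVec n) (hab : a &&& b = 0) :
    (a ^^^ X) + 2 * (b ||| X) = 2 * ((~~~(a + b)) &&& X) + X + a + 2 * b := by
  have hxor := BitVec.add_eq_xor_add_two_mul_and a X
  have hor := BitVec.add_eq_or_add_and b X
  have hsplit := BitVec.and_add_and_not X (a + b)
  rw [BitVec.and_comm X, BitVec.and_comm X] at hsplit
  have hand := BitVec.add_and_of_and_eq_zero hab X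
  linear_combination -hxor - 2 * hor - 2 * hsplit + 2 * hand
end

section
/- For every n ∈ ℕ and all x, y, z ∈ BitVec n, the identity -2*y - 2*z + 2*(x & y) + 2*(x & z) + 4*(y & z) - 4*(x & y & z) = -2*((~x) & (y ^ z)) holds, where ^ denotes bitwise xor and arithmetic is modulo 2^n. -/
/-!
Over `BitVec n` one has `a + b = (a ^^^ b) + 2 * (a &&& b)`: both sides split `a` and `b` into
the disjoint pieces `a &&& ~~~b`, `~~~a &&& b` and `a &&& b`, and a sum of bit-disjoint words is
their bitwise or. Applied to `y + z`, to `(x &&& y) + (x &&& z)`, and combined with the splitting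
`(x &&& w) + (~~~x &&& w) = w` of `w = y ^^^ z`, the identity becomes a linear
combination of these three equations in the commutative ring `BitVec n`.
-/

namespace BitVec

variable {n : ℕ}

theorem and_add_and_not_s19 (a b : BitVec n) : (a &&& b) + (a &&& ~~~b) = a := by
  rw [add_eq_or_of_and_eq_zero _ _ (by ext i; grind)]
  ext i; grind

theorem and_add_not_and (a b : BitVec n) : (a &&& b) + (~~~a &&& b) = b := by
  rw [add_eq_or_of_and_eq_zero _ _ (by ext i; grind)]
  ext i; grind

theorem and_not_add_not_and (a b : BitVec n) : (a &&& ~~~b) + (~~~a &&& b) = a ^^^ b := by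
  rw [add_eq_or_of_and_eq_zero _ _ (by ext i; grind)]
  ext i; grind

theorem add_eq_xor_add_two_mul_and_s19 (a b : BitVec n) : a + b = (a ^^^ b) + 2 * (a &&& b) := by
  linear_combination and_not_add_not_and a b - and_add_and_not_s19 a b - and_add_not_and a b

theorem and_add_and_eq_and_xor_add_two_mul_and (x y z : BitVec n) :
    (x &&& y) + (x &&& z) = (x &&& (y ^^^ z)) + 2 * (x &&& y &&& z) := by
  have hxor : (x &&& y) ^^^ (x &&& z) = x &&& (y ^^^ z) := by ext i; grind
  have hand : (x &&& y) &&& (x &&& z) = x &&& y &&& z := by ext i; grind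
  rw [add_eq_xor_add_two_mul_and_s19, hxor, hand]

end BitVec

/-- `-2y - 2z + 2(x&y) + 2(x&z) + 4(y&z) - 4(x&y&z) = -2((~x) & (y ^ z))` in `BitVec n`. -/
theorem mba_partition_example (n : ℕ) (x y z : BitVec n) :
    -(2 * y) - 2 * z + 2 * (x &&& y) + 2 * (x &&& z) + 4 * (y &&& z)
        - 4 * (x &&& y &&& z) = -(2 * ((~~~x) &&& (y ^^^ z))) := by
  linear_combination (-2 : BitVec n) * BitVec.add_eq_xor_add_two_mul_and_s19 y z
    + 2 * BitVec.and_add_and_eq_and_xor_add_two_mul_and x y z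
    + 2 * BitVec.and_add_not_and x (y ^^^ z)
end
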